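/- Let the valuations be monotone with marginal values at most 1, let A be an EF1 allocation, and let π be a permutation of Fin n maximizing ∑_{i} v_i(A_{π(i)}) over all permutations. Then the allocation B with B_i = A_{π(i)} can be made envy-free with a subsidy of at most 2(n − 1) to each agent: there exists a payment vector p such that (B, p) is envy-free and p i ≤ 2(n − 1) for every agent i. -/

import Mathlib

/-!
Let `w i k = vᵢ(B_k) - vᵢ(B_i)` be the envy of agent `i` for `k`'s bundle under `B`. Every cycle
of this envy graph has weight `≤ 0`: it is the total weight of the cyclic permutation it spans, and
`π` maximizes welfare. So `p i :=` the maximal weight of a simple path starting at `i` is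
nonnegative and envy-free; a path from `k` that passes through `i` is split at the cycle
`i → k → ⋯ → i`, which does not contribute.

For the bound, EF1 and marginals `≤ 1` give `w a b ≤ δ a + 1` with
`δ a = v_a(A_a) - v_a(B_a) ≥ -1`, while optimality of `π` against the identity gives `∑ δ ≤ 0`.
A simple path has at most `n - 1` edges, and the `δ`s of their sources add up to at most `n - 1`.
-/

open Finset

namespace EnvyGraph

variable {α : Type*}

def pathWeight (w : α → α → ℝ) : List α → ℝ
  | a :: b :: l => w a b + pathWeight w (b :: l)
  | _ => 0

@[simp] lemma pathWeight_nil (w : α → α → ℝ) : pathWeight w [] = 0 := rfl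
@[simp] lemma pathWeight_singleton (w : α → α → ℝ) (a : α) : pathWeight w [a] = 0 := rfl
@[simp] lemma pathWeight_cons_cons (w : α → α → ℝ) (a b : α) (l : List α) :
    pathWeight w (a :: b :: l) = w a b + pathWeight w (b :: l) := rfl

lemma pathWeight_eq_sum_zipWith (w : α → α → ℝ) :
    ∀ l : List α, pathWeight w l = (List.zipWith w l l.tail).sum
  | [] | [_] => by simp
  | a :: b :: l => by simp [pathWeight_eq_sum_zipWith w (b :: l)]

lemma pathWeight_append_cons (w : α → α → ℝ) (a : α) (l₂ : List α) :
    ∀ l₁ : List α,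
      pathWeight w (l₁ ++ a :: l₂) = pathWeight w (l₁ ++ [a]) + pathWeight w (a :: l₂)
  | [] => by simp
  | [b] => by simp
  | b :: c :: l₁ => by
    have := pathWeight_append_cons w a l₂ (c :: l₁)
    simp only [List.cons_append] at this ⊢
    simp [this, add_assoc]

lemma map_formPerm_eq_zipWith_rotate [DecidableEq α] (w : α → α → ℝ) {l : List α}
    (hl : l.Nodup) :
    l.map (fun x => w x (l.formPerm x)) = List.zipWith w l (l.rotate 1) := by
  refine List.ext_getElem (by simp) fun i h₁ h₂ => ?_
  simp [List.formPerm_apply_getElem l hl]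

lemma sum_map_formPerm [DecidableEq α] (w : α → α → ℝ) {a : α} {l : List α}
    (hl : (a :: l).Nodup) :
    ((a :: l).map fun x => w x ((a :: l).formPerm x)).sum = pathWeight w (a :: l ++ [a]) := by
  rw [map_formPerm_eq_zipWith_rotate w hl, pathWeight_eq_sum_zipWith,
    List.zipWith_eq_zipWith_take_min (l₁ := a :: l ++ [a])]
  simp [List.take_of_length_le]

lemma pathWeight_cons_of_head? (w : α → α → ℝ) (a : α) {b : α} :
    ∀ {l : List α}, l.head? = some b → pathWeight w (a :: l) = w a b + pathWeight w l
  | c :: l, h => by cases Option.some.inj h; rfl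

lemma pathWeight_le_sum_dropLast {w : α → α → ℝ} {c : α → ℝ} (hc : ∀ a b, w a b ≤ c a) :
    ∀ l : List α, pathWeight w l ≤ (l.dropLast.map c).sum
  | [] | [_] => by simp
  | a :: b :: l => by
    have := pathWeight_le_sum_dropLast hc (b :: l)
    simp only [pathWeight_cons_cons, List.dropLast_cons_cons, List.map_cons, List.sum_cons]
    linarith [hc a b]

section Finite

variable [Fintype α] [DecidableEq α]

lemma pathWeight_cycle_nonpos {w : α → α → ℝ} (hdiag : ∀ i, w i i = 0)
    (hopt : ∀ σ : Equiv.Perm α, ∑ i, w i (σ i) ≤ 0) {a : α} {l : List α} (hl : (a :: l).Nodup) :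
    pathWeight w (a :: l ++ [a]) ≤ 0 := by
  have hsupp : ∑ i ∈ (a :: l).toFinset, w i ((a :: l).formPerm i)
      = ∑ i, w i ((a :: l).formPerm i) :=
    sum_subset (subset_univ _) fun x _ hx => by
      rw [List.formPerm_apply_of_notMem (by simpa using hx), hdiag]
  rw [← sum_map_formPerm w hl, ← List.sum_toFinset _ hl, hsupp]
  exact hopt _

lemma sum_le_card_sub_one [Nonempty α] {δ : α → ℝ} (hδ : ∀ a, -1 ≤ δ a) (hsum : ∑ a, δ a ≤ 0)
    (s : Finset α) : ∑ x ∈ s, δ x ≤ Fintype.card α - 1 := by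
  rcases s.eq_empty_or_nonempty with rfl | ⟨x, hx⟩
  · simp only [sum_empty, sub_nonneg, Nat.one_le_cast]
    exact Fintype.card_pos
  have hcompl : ((sᶜ).card : ℝ) ≤ Fintype.card α - 1 := by
    have := card_lt_univ_of_notMem (notMem_compl.2 hx)
    rw [le_sub_iff_add_le]; exact_mod_cast this
  have : -((sᶜ).card : ℝ) ≤ ∑ x ∈ sᶜ, δ x := by
    simpa using card_nsmul_le_sum sᶜ δ (-1) fun x _ => hδ x
  linarith [sum_add_sum_compl s δ]

lemma pathWeight_le_two_mul_card_sub_one {w : α → α → ℝ} {δ : α → ℝ} (hδ : ∀ a, -1 ≤ δ a)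
    (hsum : ∑ a, δ a ≤ 0) (hw : ∀ a b, w a b ≤ δ a + 1)
    {l : List α} (hl : l.Nodup) (hne : l ≠ []) :
    pathWeight w l ≤ 2 * (Fintype.card α - 1) := by
  have : Nonempty α := ⟨l.head hne⟩
  set s := l.dropLast.toFinset
  have hs : ∑ x ∈ s, (δ x + 1) = (l.dropLast.map fun x => δ x + 1).sum :=
    List.sum_toFinset _ (hl.sublist (List.dropLast_sublist l))
  have hcard : (s.card : ℝ) ≤ Fintype.card α - 1 := by
    have hlast : l.getLast hne ∉ s := by
      have hdisj := (List.nodup_append.1 (List.dropLast_append_getLast hne ▸ hl)).2.2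
      simpa [s] using fun h => hdisj _ h _ (List.mem_singleton_self _) rfl
    have := card_lt_univ_of_notMem hlast
    rw [le_sub_iff_add_le]; exact_mod_cast this
  have := pathWeight_le_sum_dropLast hw l
  rw [← hs, sum_add_distrib] at this
  simp only [sum_const, nsmul_eq_mul, mul_one] at this
  linarith [sum_le_card_sub_one hδ hsum s]

def simplePathsFrom (i : α) : Finset (List α) :=
  {l ∈ univ.map (Function.Embedding.subtype List.Nodup) | (i :: l).Nodup}

lemma mem_simplePathsFrom {i : α} {l : List α} : l ∈ simplePathsFrom i ↔ (i :: l).Nodup := by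
  simp only [simplePathsFrom, mem_filter, mem_map, mem_univ, true_and,
    Function.Embedding.coe_subtype]
  exact ⟨fun h => h.2, fun h => ⟨⟨⟨l, h.of_cons⟩, rfl⟩, h⟩⟩

def maxPathWeight (w : α → α → ℝ) (i : α) : ℝ :=
  (simplePathsFrom i).sup' ⟨[], mem_simplePathsFrom.2 (List.nodup_singleton i)⟩
    fun l => pathWeight w (i :: l)

variable (w : α → α → ℝ)

lemma pathWeight_le_maxPathWeight {i : α} {l : List α} (hl : (i :: l).Nodup) :
    pathWeight w (i :: l) ≤ maxPathWeight w i :=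
  le_sup' (fun l => pathWeight w (i :: l)) (mem_simplePathsFrom.2 hl)

lemma exists_maxPathWeight_eq (i : α) :
    ∃ l, (i :: l).Nodup ∧ maxPathWeight w i = pathWeight w (i :: l) := by
  obtain ⟨l, hl, h⟩ := exists_mem_eq_sup' _ (fun l => pathWeight w (i :: l))
  exact ⟨l, mem_simplePathsFrom.1 hl, h⟩

lemma maxPathWeight_nonneg (i : α) : 0 ≤ maxPathWeight w i := by
  simpa using pathWeight_le_maxPathWeight w (List.nodup_singleton i)

lemma maxPathWeight_le {i : α} {B : ℝ} (hB : ∀ l, (i :: l).Nodup → pathWeight w (i :: l) ≤ B) :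
    maxPathWeight w i ≤ B :=
  sup'_le _ _ fun l hl => hB l (mem_simplePathsFrom.1 hl)

lemma add_maxPathWeight_le
    (hcycle : ∀ a l, (a :: l).Nodup → pathWeight w (a :: l ++ [a]) ≤ 0) (i k : α) :
    w i k + maxPathWeight w k ≤ maxPathWeight w i := by
  obtain ⟨l, hl, hk⟩ := exists_maxPathWeight_eq w k
  rw [hk]
  by_cases hi : i ∈ k :: l
  · obtain ⟨l₁, l₂, hsplit⟩ := List.append_of_mem hi
    rw [hsplit] at hl ⊢
    have hhead : (l₁ ++ [i]).head? = some k := by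
      simpa [List.head?_append] using (congrArg List.head? hsplit).symm
    have hcyc := hcycle i l₁
      ((List.perm_append_singleton i l₁).nodup_iff.1 (hl.sublist (by simp)))
    rw [List.cons_append, pathWeight_cons_of_head? w i hhead] at hcyc
    rw [pathWeight_append_cons]
    linarith [pathWeight_le_maxPathWeight w hl.of_append_right]
  · simpa using pathWeight_le_maxPathWeight w (List.nodup_cons.2 ⟨hi, hl⟩)

end Finite

end EnvyGraph

open EnvyGraph

lemma le_add_one_of_eq_empty_or_le_erase {ι : Type*} [DecidableEq ι] {v : Finset ι → ℝ}
    (hmono : Monotone v)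
    (hmarg : ∀ S j, j ∉ S → v (insert j S) ≤ v S + 1) {S T : Finset ι}
    (h : T = ∅ ∨ ∃ j ∈ T, v S ≥ v (T.erase j)) : v T ≤ v S + 1 := by
  rcases h with rfl | ⟨j, hj, hle⟩
  · linarith [hmono (empty_subset S)]
  · have := hmarg _ j (notMem_erase j T)
    rw [insert_erase hj] at this
    linarith

theorem EF1_redistribution_subsidy_bound_general
    (n m : ℕ)
    (v : Fin n → Finset (Fin m) → ℝ)
    (hmono : ∀ i (S T : Finset (Fin m)), S ⊆ T → v i S ≤ v i T)
    (hmarg : ∀ i (S : Finset (Fin m)) (j : Fin m), j ∉ S → v i (insert j S) ≤ v i S + 1)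
    (A : Fin n → Finset (Fin m))
    (hEF1 : ∀ i k : Fin n, A k = ∅ ∨
      ∃ j ∈ A k, v i (A i) ≥ v i ((A k).erase j))
    (π : Equiv.Perm (Fin n))
    (hπ : ∀ σ : Equiv.Perm (Fin n), (∑ i, v i (A (σ i))) ≤ ∑ i, v i (A (π i))) :
    ∃ p : Fin n → ℝ, (∀ i, 0 ≤ p i) ∧
      (∀ i k : Fin n, v i (A (π i)) + p i ≥ v i (A (π k)) + p k) ∧
      (∀ i, p i ≤ 2 * ((n : ℝ) - 1)) := by
  have hEF1' : ∀ a b, v a (A b) ≤ v a (A a) + 1 := fun a b =>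
    le_add_one_of_eq_empty_or_le_erase (fun S T => hmono a S T) (hmarg a) (hEF1 a b)
  set w : Fin n → Fin n → ℝ := fun i k => v i (A (π k)) - v i (A (π i))
  set δ : Fin n → ℝ := fun i => v i (A i) - v i (A (π i))
  have hδ : ∀ a, -1 ≤ δ a := fun a => by linarith [hEF1' a (π a)]
  have hsum : ∑ a, δ a ≤ 0 := by
    simpa [δ, sum_sub_distrib] using hπ 1
  have hw : ∀ a b, w a b ≤ δ a + 1 := fun a b => by linarith [hEF1' a (π b)]
  have hcycle : ∀ a l, (a :: l).Nodup → pathWeight w (a :: l ++ [a]) ≤ 0 :=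
    fun a l => pathWeight_cycle_nonpos (w := w) (fun i => sub_self _) fun σ => by
      simpa [w, sum_sub_distrib] using hπ (σ.trans π)
  refine ⟨maxPathWeight w, maxPathWeight_nonneg w, fun i k => ?_, fun i => ?_⟩
  · linarith [add_maxPathWeight_le w hcycle i k]
  · refine maxPathWeight_le w fun l hl => ?_
    simpa using pathWeight_le_two_mul_card_sub_one hδ hsum hw hl (List.cons_ne_nil i l)

/-- Let the valuations be monotone with marginal values at most 1, let
A be an EF1 allocation, and let π be a permutation maximizing ∑ i, v i (A (π i))
over all permutations. Then the allocation B with B i = A (π i) can be made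
envy-free with a subsidy of at most 2(n − 1) to each agent. -/
theorem EF1_redistribution_subsidy_bound
    (n m : ℕ) (hn : 1 ≤ n)
    (v : Fin n → Finset (Fin m) → ℝ)
    (hv0 : ∀ i, v i ∅ = 0)
    (hmono : ∀ i (S T : Finset (Fin m)), S ⊆ T → v i S ≤ v i T)
    (hmarg : ∀ i (S : Finset (Fin m)) (j : Fin m), j ∉ S → v i (insert j S) ≤ v i S + 1)
    (A : Fin n → Finset (Fin m))
    (hdisj : ∀ i k, i ≠ k → Disjoint (A i) (A k))
    (hcover : Finset.univ.biUnion A = Finset.univ)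
    (hEF1 : ∀ i k : Fin n, A k = ∅ ∨
      ∃ j ∈ A k, v i (A i) ≥ v i ((A k).erase j))
    (π : Equiv.Perm (Fin n))
    (hπ : ∀ σ : Equiv.Perm (Fin n), (∑ i, v i (A (σ i))) ≤ ∑ i, v i (A (π i))) :
    ∃ p : Fin n → ℝ, (∀ i, 0 ≤ p i) ∧
      (∀ i k : Fin n, v i (A (π i)) + p i ≥ v i (A (π k)) + p k) ∧
      (∀ i, p i ≤ 2 * ((n : ℝ) - 1)) :=
  EF1_redistribution_subsidy_bound_general n m v hmono hmarg A hEF1 π hπ
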